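/- Let G = (1/N)∑_{i=1}^N G_i where each G_i: ℝ^d → ℝ is L-smooth with ‖∇G_i(x)‖ ≤ σ for all x. Let θ, θ̃ ∈ ℝ^d, let B be a uniformly random subset (or i.i.d. sample) of size n from {1,…,N}, c ∈ ℝ, and define u = (1/n)∑_{i∈B}(∇G_i(θ) − c∇G_i(θ̃)) + c∇G(θ̃). Then E[‖u‖²] ≤ 2‖∇G(θ)‖² + (4c²L²/n)‖θ − θ̃‖² + (4(1−c)²/n)σ². -/

import Mathlib

open MeasureTheory ProbabilityTheory Finset
open scoped RealInnerProductSpace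

/-!
Write `gᵢ = ∇Gᵢ(θ) - c ∇Gᵢ(θ̃)` and `ḡ` for their average, so that `ḡ + c ∇G(θ̃) = ∇G(θ)` and
`u = ∇G(θ) + (1/n) ∑_{j ∈ B} (g_j - ḡ)`. Hence `‖u‖² ≤ 2 ‖∇G(θ)‖² + 2 ‖(1/n) ∑_{j ∈ B} (g_j - ḡ)‖²`.
The summands `g_j - ḡ` are independent and centred, so the cross terms vanish in expectation and
the second moment of their mean is `1/n` times their variance, which is at most the average of
`‖gᵢ‖²`. Finally `gᵢ = (1 - c) ∇Gᵢ(θ) + c (∇Gᵢ(θ) - ∇Gᵢ(θ̃))` gives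
`‖gᵢ‖² ≤ 2 (1 - c)² σ² + 2 c² L² ‖θ - θ̃‖²`.
-/

lemma norm_add_sq_le_two_mul {E : Type*} [SeminormedAddCommGroup E] (x y : E) :
    ‖x + y‖ ^ 2 ≤ 2 * (‖x‖ ^ 2 + ‖y‖ ^ 2) :=
  (pow_le_pow_left₀ (norm_nonneg _) (norm_add_le x y) 2).trans add_sq_le

lemma norm_sub_smul_sq_le {E : Type*} [SeminormedAddCommGroup E] [NormedSpace ℝ E]
    (x y : E) (c : ℝ) :
    ‖x - c • y‖ ^ 2 ≤ 2 * ((1 - c) ^ 2 * ‖x‖ ^ 2 + c ^ 2 * ‖x - y‖ ^ 2) := by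
  have h : x - c • y = (1 - c) • x + c • (x - y) := by
    rw [smul_sub, sub_smul, one_smul]; abel
  calc ‖x - c • y‖ ^ 2 ≤ 2 * (‖(1 - c) • x‖ ^ 2 + ‖c • (x - y)‖ ^ 2) :=
        h ▸ norm_add_sq_le_two_mul _ _
    _ = 2 * ((1 - c) ^ 2 * ‖x‖ ^ 2 + c ^ 2 * ‖x - y‖ ^ 2) := by
        simp only [norm_smul, mul_pow, Real.norm_eq_abs, sq_abs]

section Average

variable {α E : Type*} [Fintype α] [Nonempty α] [AddCommGroup E] [Module ℝ E]

lemma sum_sub_average_eq_zero (g : α → E) :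
    ∑ i, (g i - (Fintype.card α : ℝ)⁻¹ • ∑ k, g k) = 0 := by
  rw [sum_sub_distrib, sum_const, card_univ, ← Nat.cast_smul_eq_nsmul ℝ, smul_smul,
    mul_inv_cancel₀ (by positivity), one_smul, sub_self]

lemma inv_card_smul_sum_eq_add_inv_card_smul_sum_sub (v : α → E) (m : E) :
    (Fintype.card α : ℝ)⁻¹ • ∑ i, v i = m + (Fintype.card α : ℝ)⁻¹ • ∑ i, (v i - m) := by
  rw [sum_sub_distrib, sum_const, card_univ, ← Nat.cast_smul_eq_nsmul ℝ, smul_sub, smul_smul,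
    inv_mul_cancel₀ (by positivity), one_smul, add_sub_cancel]

end Average

section Centering

variable {α E : Type*} [Fintype α] [SeminormedAddCommGroup E] [InnerProductSpace ℝ E]

lemma sum_norm_sub_average_sq_le (g : α → E) :
    ∑ i, ‖g i - (Fintype.card α : ℝ)⁻¹ • ∑ k, g k‖ ^ 2 ≤ ∑ i, ‖g i‖ ^ 2 := by
  set m := (Fintype.card α : ℝ)⁻¹ • ∑ k, g k
  have hsum : ∑ i, ⟪g i, m⟫ = Fintype.card α * ‖m‖ ^ 2 := by
    rcases isEmpty_or_nonempty α with hα | hα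
    · simp
    rw [← sum_inner, ← real_inner_self_eq_norm_sq, ← real_inner_smul_left, smul_smul,
      mul_inv_cancel₀ (by positivity), one_smul]
  have : ∑ i, ‖g i - m‖ ^ 2 = ∑ i, ‖g i‖ ^ 2 - Fintype.card α * ‖m‖ ^ 2 := by
    simp only [norm_sub_sq_real, sum_add_distrib, sum_sub_distrib, ← mul_sum, hsum,
      sum_const, card_univ, nsmul_eq_mul]
    ring
  rw [this]
  exact sub_le_self _ (by positivity)

lemma inv_card_mul_sum_norm_sub_average_sq_le [Nonempty α] (g : α → E) {K : ℝ}
    (hg : ∀ i, ‖g i‖ ^ 2 ≤ K) :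
    (Fintype.card α : ℝ)⁻¹ * ∑ i, ‖g i - (Fintype.card α : ℝ)⁻¹ • ∑ k, g k‖ ^ 2 ≤ K := by
  calc (Fintype.card α : ℝ)⁻¹ * ∑ i, ‖g i - (Fintype.card α : ℝ)⁻¹ • ∑ k, g k‖ ^ 2
      ≤ (Fintype.card α : ℝ)⁻¹ * ∑ _i : α, K := by
        gcongr ?_ * ?_
        exact (sum_norm_sub_average_sq_le g).trans (sum_le_sum fun i _ ↦ hg i)
    _ = K := by
        rw [sum_const, card_univ, nsmul_eq_mul, inv_mul_cancel_left₀ (by positivity)]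

end Centering

section UniformIndex

variable {Ω α β E : Type*} [MeasurableSpace Ω] {μ : Measure Ω}
  [Fintype α] [MeasurableSpace α] [MeasurableSingletonClass α]
  [Fintype β] [MeasurableSpace β] [MeasurableSingletonClass β]
  [NormedAddCommGroup E] [InnerProductSpace ℝ E] [CompleteSpace E]

lemma integrable_comp_of_finite [IsFiniteMeasure μ] {γ F : Type*} [Finite γ] [MeasurableSpace γ]
    [MeasurableSingletonClass γ] [NormedAddCommGroup F] {X : Ω → γ} (hX : Measurable X)
    (f : γ → F) : Integrable (fun ω ↦ f (X ω)) μ :=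
  (integrable_map_measure StronglyMeasurable.of_discrete.aestronglyMeasurable
    hX.aemeasurable).mp .of_finite

variable [Nonempty α]

lemma integral_comp_of_map_eq_uniform {F : Type*} [NormedAddCommGroup F] [NormedSpace ℝ F]
    [CompleteSpace F] {X : Ω → α} (hX : Measurable X)
    (hu : μ.map X = (PMF.uniformOfFintype α).toMeasure) (f : α → F) :
    ∫ ω, f (X ω) ∂μ = (Fintype.card α : ℝ)⁻¹ • ∑ i, f i := by
  rw [← integral_map hX.aemeasurable StronglyMeasurable.of_discrete.aestronglyMeasurable, hu,
    PMF.integral_eq_sum, smul_sum]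
  simp [PMF.uniformOfFintype_apply]

lemma integral_inner_comp_eq_zero_of_indepFun [IsFiniteMeasure μ] {X : Ω → α} {Y : Ω → β}
    (hX : Measurable X) (hY : Measurable Y) (hu : μ.map X = (PMF.uniformOfFintype α).toMeasure)
    (hXY : IndepFun X Y μ) {Z : α → E} (hZ : ∑ i, Z i = 0) (W : β → E) :
    ∫ ω, ⟪Z (X ω), W (Y ω)⟫ ∂μ = 0 := by
  have hprod : μ.map (fun ω ↦ (X ω, Y ω)) = (μ.map X).prod (μ.map Y) :=
    (indepFun_iff_map_prod_eq_prod_map_map hX.aemeasurable hY.aemeasurable).mp hXY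
  rw [← integral_map (f := fun p : α × β ↦ ⟪Z p.1, W p.2⟫) (hX.prodMk hY).aemeasurable
      StronglyMeasurable.of_discrete.aestronglyMeasurable,
    hprod, integral_prod _ .of_finite, hu]
  simp_rw [PMF.integral_eq_sum, integral_inner .of_finite]
  simp only [PMF.uniformOfFintype_apply, smul_eq_mul, ← mul_sum, ← sum_inner, hZ, inner_zero_left,
    mul_zero]

lemma integral_norm_sum_comp_sq_of_pairwise_indepFun [IsFiniteMeasure μ] {ι : Type*} [Fintype ι]
    {X : ι → Ω → α} (hX : ∀ j, Measurable (X j))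
    (hu : ∀ j, μ.map (X j) = (PMF.uniformOfFintype α).toMeasure)
    (hind : Pairwise fun j k ↦ IndepFun (X j) (X k) μ) {Z : α → E} (hZ : ∑ i, Z i = 0) :
    ∫ ω, ‖∑ j, Z (X j ω)‖ ^ 2 ∂μ
      = Fintype.card ι * ((Fintype.card α : ℝ)⁻¹ * ∑ i, ‖Z i‖ ^ 2) := by
  classical
  have hcov : ∀ j k, ∫ ω, ⟪Z (X j ω), Z (X k ω)⟫ ∂μ
      = if j = k then (Fintype.card α : ℝ)⁻¹ * ∑ i, ‖Z i‖ ^ 2 else 0 := by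
    intro j k
    split_ifs with hjk
    · subst hjk
      simp_rw [real_inner_self_eq_norm_sq]
      exact integral_comp_of_map_eq_uniform (hX j) (hu j) fun i ↦ ‖Z i‖ ^ 2
    · exact integral_inner_comp_eq_zero_of_indepFun (hX j) (hX k) (hu j) (hind hjk) hZ Z
  have hint : ∀ j k, Integrable (fun ω ↦ ⟪Z (X j ω), Z (X k ω)⟫) μ := fun j k ↦
    integrable_comp_of_finite ((hX j).prodMk (hX k)) fun p : α × α ↦ ⟪Z p.1, Z p.2⟫
  calc ∫ ω, ‖∑ j, Z (X j ω)‖ ^ 2 ∂μ = ∫ ω, ∑ j, ∑ k, ⟪Z (X j ω), Z (X k ω)⟫ ∂μ := by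
        simp_rw [← real_inner_self_eq_norm_sq, sum_inner, inner_sum]
    _ = ∑ j, ∑ k, ∫ ω, ⟪Z (X j ω), Z (X k ω)⟫ ∂μ := by
        rw [integral_finsetSum _ fun j _ ↦ integrable_finsetSum _ fun k _ ↦ hint j k]
        exact sum_congr rfl fun j _ ↦ integral_finsetSum _ fun k _ ↦ hint j k
    _ = _ := by simp [hcov]

lemma integral_norm_add_sample_mean_sq_le [IsProbabilityMeasure μ] {ι : Type*} [Fintype ι]
    {X : ι → Ω → α} (hX : ∀ j, Measurable (X j))
    (hu : ∀ j, μ.map (X j) = (PMF.uniformOfFintype α).toMeasure)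
    (hind : Pairwise fun j k ↦ IndepFun (X j) (X k) μ) {Z : α → E} (hZ : ∑ i, Z i = 0) (a : E) :
    ∫ ω, ‖a + (Fintype.card ι : ℝ)⁻¹ • ∑ j, Z (X j ω)‖ ^ 2 ∂μ
      ≤ 2 * ‖a‖ ^ 2 + 2 / Fintype.card ι * ((Fintype.card α : ℝ)⁻¹ * ∑ i, ‖Z i‖ ^ 2) := by
  have hint : Integrable (fun ω ↦ ‖∑ j, Z (X j ω)‖ ^ 2) μ :=
    integrable_comp_of_finite (measurable_pi_lambda _ hX) fun x : ι → α ↦ ‖∑ j, Z (x j)‖ ^ 2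
  calc ∫ ω, ‖a + (Fintype.card ι : ℝ)⁻¹ • ∑ j, Z (X j ω)‖ ^ 2 ∂μ
      ≤ ∫ ω, 2 * ‖a‖ ^ 2 + 2 * (Fintype.card ι : ℝ)⁻¹ ^ 2 * ‖∑ j, Z (X j ω)‖ ^ 2 ∂μ := by
        refine integral_mono
          (integrable_comp_of_finite (measurable_pi_lambda _ hX)
            fun x : ι → α ↦ ‖a + (Fintype.card ι : ℝ)⁻¹ • ∑ j, Z (x j)‖ ^ 2)
          ((integrable_const _).add (hint.const_mul _)) fun ω ↦ ?_
        have := norm_add_sq_le_two_mul a ((Fintype.card ι : ℝ)⁻¹ • ∑ j, Z (X j ω))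
        rw [norm_smul, mul_pow, Real.norm_of_nonneg (by positivity)] at this
        linarith
    _ = 2 * ‖a‖ ^ 2 + 2 / Fintype.card ι * ((Fintype.card α : ℝ)⁻¹ * ∑ i, ‖Z i‖ ^ 2) := by
        rw [integral_add (integrable_const _) (hint.const_mul _), integral_const, probReal_univ,
          one_smul, integral_const_mul, integral_norm_sum_comp_sq_of_pairwise_indepFun hX hu hind hZ]
        field_simp

lemma integral_norm_sample_mean_add_sq_le [IsProbabilityMeasure μ] {ι : Type*} [Fintype ι]
    [Nonempty ι] {X : ι → Ω → α} (hX : ∀ j, Measurable (X j))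
    (hu : ∀ j, μ.map (X j) = (PMF.uniformOfFintype α).toMeasure)
    (hind : Pairwise fun j k ↦ IndepFun (X j) (X k) μ) (g : α → E) (b : E) :
    ∫ ω, ‖(Fintype.card ι : ℝ)⁻¹ • ∑ j, g (X j ω) + b‖ ^ 2 ∂μ
      ≤ 2 * ‖(Fintype.card α : ℝ)⁻¹ • ∑ i, g i + b‖ ^ 2 + 2 / Fintype.card ι *
        ((Fintype.card α : ℝ)⁻¹ * ∑ i, ‖g i - (Fintype.card α : ℝ)⁻¹ • ∑ k, g k‖ ^ 2) := by
  set m := (Fintype.card α : ℝ)⁻¹ • ∑ i, g i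
  have hsplit : ∀ ω, (Fintype.card ι : ℝ)⁻¹ • ∑ j, g (X j ω) + b
      = (m + b) + (Fintype.card ι : ℝ)⁻¹ • ∑ j, (g (X j ω) - m) := fun ω ↦ by
    rw [inv_card_smul_sum_eq_add_inv_card_smul_sum_sub _ m]
    abel
  simp only [hsplit]
  exact integral_norm_add_sample_mean_sq_le hX hu hind (sum_sub_average_eq_zero g) (m + b)

end UniformIndex

theorem agent_gradient_estimator_second_moment_general
    {Ω : Type*} [MeasurableSpace Ω] (μ : Measure Ω) [IsProbabilityMeasure μ]
    {d N n : ℕ} [NeZero N] (hn : 0 < n)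
    (Gi : Fin N → EuclideanSpace ℝ (Fin d) → ℝ) (L σ : ℝ)
    (hL : ∀ i x y, ‖gradient (Gi i) x - gradient (Gi i) y‖ ≤ L * ‖x - y‖)
    (hσ : ∀ i x, ‖gradient (Gi i) x‖ ≤ σ)
    (θ θt : EuclideanSpace ℝ (Fin d)) (c : ℝ)
    (B : Fin n → Ω → Fin N)
    (hmeas : ∀ j, Measurable (B j))
    (hunif : ∀ j, Measure.map (B j) μ = (PMF.uniformOfFintype (Fin N)).toMeasure)
    (hindep : iIndepFun B μ) :
    ∫ ω, ‖(n : ℝ)⁻¹ • (∑ j : Fin n,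
            (gradient (Gi (B j ω)) θ - c • gradient (Gi (B j ω)) θt))
          + c • ((N : ℝ)⁻¹ • ∑ i : Fin N, gradient (Gi i) θt)‖ ^ 2 ∂μ
      ≤ 2 * ‖(N : ℝ)⁻¹ • ∑ i : Fin N, gradient (Gi i) θ‖ ^ 2
        + (4 * c ^ 2 * L ^ 2 / n) * ‖θ - θt‖ ^ 2
        + (4 * (1 - c) ^ 2 / n) * σ ^ 2 := by
  have : Nonempty (Fin n) := Fin.pos_iff_nonempty.mp hn
  have hmean : (N : ℝ)⁻¹ • ∑ i, (gradient (Gi i) θ - c • gradient (Gi i) θt)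
      + c • (N : ℝ)⁻¹ • ∑ i, gradient (Gi i) θt = (N : ℝ)⁻¹ • ∑ i, gradient (Gi i) θ := by
    simp only [sum_sub_distrib, ← smul_sum, smul_sub, smul_comm c]
    abel
  have hvar := inv_card_mul_sum_norm_sub_average_sq_le
    (fun i ↦ gradient (Gi i) θ - c • gradient (Gi i) θt)
    (K := 2 * ((1 - c) ^ 2 * σ ^ 2 + c ^ 2 * (L * ‖θ - θt‖) ^ 2))
    fun i ↦ (norm_sub_smul_sq_le _ _ c).trans (by gcongr; exacts [hσ i θ, hL i θ θt])
  have key := integral_norm_sample_mean_add_sq_le hmeas hunif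
    (fun j k hjk ↦ hindep.indepFun hjk) (fun i ↦ gradient (Gi i) θ - c • gradient (Gi i) θt)
    (c • (N : ℝ)⁻¹ • ∑ i, gradient (Gi i) θt)
  simp only [Fintype.card_fin, hmean] at key hvar
  calc _ ≤ _ := key
    _ ≤ 2 * ‖(N : ℝ)⁻¹ • ∑ i, gradient (Gi i) θ‖ ^ 2
          + 2 / n * (2 * ((1 - c) ^ 2 * σ ^ 2 + c ^ 2 * (L * ‖θ - θt‖) ^ 2)) := by gcongr
    _ = _ := by ring

theorem agent_gradient_estimator_second_moment
    {Ω : Type*} [MeasurableSpace Ω] (μ : Measure Ω) [IsProbabilityMeasure μ]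
    {d N n : ℕ} [NeZero N] (hn : 0 < n)
    (Gi : Fin N → EuclideanSpace ℝ (Fin d) → ℝ) (L σ : ℝ)
    (hdiff : ∀ i, Differentiable ℝ (Gi i))
    (hL : ∀ i x y, ‖gradient (Gi i) x - gradient (Gi i) y‖ ≤ L * ‖x - y‖)
    (hσ : ∀ i x, ‖gradient (Gi i) x‖ ≤ σ)
    (θ θt : EuclideanSpace ℝ (Fin d)) (c : ℝ)
    (B : Fin n → Ω → Fin N)
    (hmeas : ∀ j, Measurable (B j))
    (hunif : ∀ j, Measure.map (B j) μ = (PMF.uniformOfFintype (Fin N)).toMeasure)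
    (hindep : iIndepFun B μ) :
    ∫ ω, ‖(n : ℝ)⁻¹ • (∑ j : Fin n,
            (gradient (Gi (B j ω)) θ - c • gradient (Gi (B j ω)) θt))
          + c • ((N : ℝ)⁻¹ • ∑ i : Fin N, gradient (Gi i) θt)‖ ^ 2 ∂μ
      ≤ 2 * ‖(N : ℝ)⁻¹ • ∑ i : Fin N, gradient (Gi i) θ‖ ^ 2
        + (4 * c ^ 2 * L ^ 2 / n) * ‖θ - θt‖ ^ 2
        + (4 * (1 - c) ^ 2 / n) * σ ^ 2 :=
  agent_gradient_estimator_second_moment_general μ hn Gi L σ hL hσ θ θt c B hmeas hunif hindep
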